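/- arXiv:1908.03759 — 2 statements merged into one kernel-verified Lean document; each statement's English description precedes it below -/
import Mathlib

section
/- Let |ψ⟩ be a unit vector in a Hilbert space, let V = {b_{i_m} ⋯ b_{i_1}|ψ⟩ : m ≤ k, each i_j ∈ {1,…,N}} for a family of N operators b₁,…,b_N, and let Π be the orthogonal projection onto span(V). Then for all m ≤ 2k+1 and all index sequences, ⟨ψ| b_{j_m} Π b_{j_{m-1}} Π ⋯ Π b_{j_1} |ψ⟩ = ⟨ψ| b_{j_m} b_{j_{m-1}} ⋯ b_{j_1} |ψ⟩. -/
/-!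
Split a word of length at most `2k + 1` as `L₁ ++ L₂` with `|L₁| ≤ k` and `|L₂| ≤ k + 1`.
On the right, every `Π` in `L₂` acts on a word of length at most `k` applied to `ψ`, which lies in
the range of `Π`, so these projections can be dropped. On the left, `Π` is self-adjoint and the
family is closed under adjoints, so the projections in `L₁` can be moved onto the bra `⟨ψ|`, where
they again act on words of length at most `k` applied to `ψ`.
-/

/-- `altApply P [aₘ, …, a₁] v = aₘ (P (aₘ₋₁ (P ( ⋯ (P (a₁ v)) ⋯ ))))`: the operators in the
list are applied from right to left, with `P` inserted between consecutive operators. -/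
def altApply {E : Type*} [AddCommGroup E] [Module ℂ E]
    (P : E →ₗ[ℂ] E) : List (E →ₗ[ℂ] E) → E → E
  | [], v => v
  | [a], v => a v
  | a :: rest, v => a (P (altApply P rest v))

section Words

variable {ι E : Type*} [AddCommGroup E] [Module ℂ E]

theorem altApply_cons_cons (P a a' : E →ₗ[ℂ] E) (L : List (E →ₗ[ℂ] E)) (v : E) :
    altApply P (a :: a' :: L) v = a (P (altApply P (a' :: L) v)) := rfl

theorem altApply_id (L : List (E →ₗ[ℂ] E)) (v : E) : altApply LinearMap.id L v = L.prod v := by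
  induction L with
  | nil => rfl
  | cons a L ih =>
    cases L with
    | nil => rfl
    | cons a' L => rw [altApply_cons_cons, ih]; rfl

theorem altApply_append (P : E →ₗ[ℂ] E) (L₁ L₂ : List (E →ₗ[ℂ] E)) (h : L₂ ≠ []) (v : E) :
    altApply P (L₁ ++ L₂) v = (L₁.map (· * P)).prod (altApply P L₂ v) := by
  induction L₁ with
  | nil => rfl
  | cons a L₁ ih =>
    obtain ⟨a', L, hL⟩ := List.exists_cons_of_ne_nil (List.append_ne_nil_of_right_ne_nil L₁ h)
    rw [List.cons_append, hL, altApply_cons_cons, ← hL, ih]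
    rfl

def FixesWords (P : E →ₗ[ℂ] E) (b : ι → E →ₗ[ℂ] E) (j : ℕ) (v : E) : Prop :=
  ∀ is : List ι, is.length ≤ j → P ((is.map b).prod v) = (is.map b).prod v

variable {P : E →ₗ[ℂ] E} {b : ι → E →ₗ[ℂ] E} {j : ℕ} {v : E}

theorem FixesWords.mono {i : ℕ} (h : FixesWords P b j v) (hij : i ≤ j) : FixesWords P b i v :=
  fun is hlen => h is (hlen.trans hij)

theorem FixesWords.apply (h : FixesWords P b (j + 1) v) (i : ι) : FixesWords P b j (b i v) := by
  intro is hlen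
  simpa [List.prod_append] using h (is ++ [i]) (by simpa using hlen)

theorem FixesWords.apply_self (h : FixesWords P b (j + 1) v) (i : ι) : P (b i v) = b i v := by
  simpa using h [i] (by simp)

theorem FixesWords.altApply_eq_prod (h : FixesWords P b j v) (is : List ι)
    (hlen : is.length ≤ j + 1) : altApply P (is.map b) v = (is.map b).prod v := by
  induction is with
  | nil => rfl
  | cons i is ih =>
    cases is with
    | nil => rfl
    | cons i' is =>
      have hlen' : (i' :: is).length ≤ j := by simpa using hlen
      rw [List.map_cons, List.map_cons, altApply_cons_cons, ← List.map_cons,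
        ih (hlen'.trans j.le_succ), h _ hlen']
      rfl

end Words

section Inner

variable {ι E : Type*} [NormedAddCommGroup E] [InnerProductSpace ℂ E] [FiniteDimensional ℂ E]
  {P : E →ₗ[ℂ] E} {b : ι → E →ₗ[ℂ] E}

theorem FixesWords.inner_prod_map_mul (hsa : LinearMap.adjoint P = P)
    (hadj : ∀ i, ∃ j, LinearMap.adjoint (b i) = b j) (is : List ι) {v : E}
    (h : FixesWords P b is.length v) (w : E) :
    inner ℂ v (((is.map b).map (· * P)).prod w) = inner ℂ v ((is.map b).prod w) := by
  induction is generalizing v with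
  | nil => rfl
  | cons i is ih =>
    obtain ⟨i', hi'⟩ := hadj i
    simp only [List.map_cons, List.prod_cons, Module.End.mul_apply]
    rw [← LinearMap.adjoint_inner_left, hi', ← LinearMap.adjoint_inner_left, hsa,
      h.apply_self, ih (h.apply i'), ← hi', LinearMap.adjoint_inner_left]

theorem FixesWords.inner_altApply_eq_inner_prod {k : ℕ} {v : E} (hsa : LinearMap.adjoint P = P)
    (hadj : ∀ i, ∃ j, LinearMap.adjoint (b i) = b j) (h : FixesWords P b k v) (is : List ι)
    (hlen : is.length ≤ 2 * k + 1) :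
    inner ℂ v (altApply P (is.map b) v) = inner ℂ v ((is.map b).prod v) := by
  rcases eq_or_ne is [] with rfl | hne
  · rfl
  set n := is.length - (k + 1)
  have hright : (is.drop n).length ≤ k + 1 := by simp only [List.length_drop]; omega
  have hleft : (is.take n).length ≤ k := by simp only [List.length_take]; omega
  have hright_ne : (is.drop n).map b ≠ [] := by
    rw [Ne, List.map_eq_nil_iff, List.drop_eq_nil_iff]
    have := List.length_pos_of_ne_nil hne
    omega
  rw [← List.take_append_drop n is, List.map_append, altApply_append _ _ _ hright_ne,
    h.altApply_eq_prod _ hright, (h.mono hleft).inner_prod_map_mul hsa hadj,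
    List.prod_append, Module.End.mul_apply]

end Inner

theorem stmt9_general {nn : ℕ} {N k : ℕ}
    (b : Fin N → EuclideanSpace ℂ (Fin nn) →ₗ[ℂ] EuclideanSpace ℂ (Fin nn))
    (hadj : ∀ i, ∃ j, LinearMap.adjoint (b i) = b j)
    (ψ : EuclideanSpace ℂ (Fin nn))
    (Pr : EuclideanSpace ℂ (Fin nn) →ₗ[ℂ] EuclideanSpace ℂ (Fin nn))
    (hidem : Pr ∘ₗ Pr = Pr) (hsa : LinearMap.adjoint Pr = Pr)
    (hrange : LinearMap.range Pr = Submodule.span ℂ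
      {w | ∃ m : ℕ, m ≤ k ∧ ∃ js : Fin m → Fin N,
        w = altApply LinearMap.id (List.ofFn fun i => b (js i)) ψ}) :
    ∀ m : ℕ, m ≤ 2 * k + 1 → ∀ js : Fin m → Fin N,
      (inner ℂ ψ (altApply Pr (List.ofFn fun i => b (js i)) ψ) : ℂ)
        = inner ℂ ψ (altApply LinearMap.id (List.ofFn fun i => b (js i)) ψ) := by
  have hfix : FixesWords Pr b k ψ := by
    intro is hlen
    refine (LinearMap.IsIdempotentElem.mem_range_iff hidem).mp ?_
    rw [hrange]
    refine Submodule.subset_span ⟨is.length, hlen, is.get, ?_⟩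
    rw [altApply_id, ← Function.comp_def b is.get, ← List.map_ofFn, List.ofFn_get]
  intro m hm js
  rw [← Function.comp_def b js, ← List.map_ofFn, altApply_id]
  exact hfix.inner_altApply_eq_inner_prod hsa hadj _ (by simpa using hm)

/-- With `Π` the orthogonal projection onto the span of all products of at most
`k` of the operators `b_i` (a family closed under adjoints) applied to a unit vector `ψ`,
interleaving `Π` does not change expectation values of products of length at most `2k+1`. -/
theorem stmt9 {nn : ℕ} {N k : ℕ}
    (b : Fin N → EuclideanSpace ℂ (Fin nn) →ₗ[ℂ] EuclideanSpace ℂ (Fin nn))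
    (hadj : ∀ i, ∃ j, LinearMap.adjoint (b i) = b j)
    (ψ : EuclideanSpace ℂ (Fin nn)) (hψ : ‖ψ‖ = 1)
    (Pr : EuclideanSpace ℂ (Fin nn) →ₗ[ℂ] EuclideanSpace ℂ (Fin nn))
    (hidem : Pr ∘ₗ Pr = Pr) (hsa : LinearMap.adjoint Pr = Pr)
    (hrange : LinearMap.range Pr = Submodule.span ℂ
      {w | ∃ m : ℕ, m ≤ k ∧ ∃ js : Fin m → Fin N,
        w = altApply LinearMap.id (List.ofFn fun i => b (js i)) ψ}) :
    ∀ m : ℕ, m ≤ 2 * k + 1 → ∀ js : Fin m → Fin N,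
      (inner ℂ ψ (altApply Pr (List.ofFn fun i => b (js i)) ψ) : ℂ)
        = inner ℂ ψ (altApply LinearMap.id (List.ofFn fun i => b (js i)) ψ) :=
  stmt9_general b hadj ψ Pr hidem hsa hrange
end

section
/- In the setting of the fourth-order environment model (|v⟩, one-excitation states |ω⟩, two-excitation states |ω₁,ω₂⟩, with H̃_E and B̃_β as specified), the four-point vacuum correlation satisfies ⟨v| B̃_β(s) B̃_{β₁}(s₁) B̃_{β₂}(s₂) B̃_{β₃}(s₃) |v⟩ = ⟨v| B̃_β(s) B̃_{β₁}(s₁) |v⟩⟨v| B̃_{β₂}(s₂) B̃_{β₃}(s₃) |v⟩ + ∑_{ω,ω',ω₁,ω₂} e^{-iω'(s-s₁)} e^{-i(ω₁+ω₂)(s₁-s₂)} e^{-iω(s₂-s₃)} g_{β,ω'} g_{β₁,ω',ω₁,ω₂} g*_{β₂,ω,ω₁,ω₂} g*_{β₃,ω}. -/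
open Matrix Complex

/-- Environment Hamiltonian of the fourth-order model: vacuum `|v⟩`, one-excitation states
`|ω⟩` and two-excitation states `|ω₁,ω₂⟩`. -/
noncomputable def H4 {F : Type*} [Fintype F] [DecidableEq F] (freq : F → ℝ) :
    Matrix (Unit ⊕ F ⊕ F × F) (Unit ⊕ F ⊕ F × F) ℂ :=
  Matrix.diagonal fun i => match i with
    | Sum.inl _ => 0
    | Sum.inr (Sum.inl w) => (freq w : ℂ)
    | Sum.inr (Sum.inr (w1, w2)) => ((freq w1 + freq w2 : ℝ) : ℂ)

/-- Interaction operator `B̃_β = ∑_ω g¹_ω |v⟩⟨ω| + ∑_{ω,ω₁,ω₂} g²_{ω,ω₁,ω₂} |ω⟩⟨ω₁,ω₂| + h.c.`. -/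
def B4 {F : Type*} (g1 : F → ℂ) (g2 : F → F → F → ℂ) :
    Matrix (Unit ⊕ F ⊕ F × F) (Unit ⊕ F ⊕ F × F) ℂ :=
  Matrix.of fun i j => match i, j with
    | Sum.inl _, Sum.inr (Sum.inl w) => g1 w
    | Sum.inr (Sum.inl w), Sum.inl _ => star (g1 w)
    | Sum.inr (Sum.inl w), Sum.inr (Sum.inr (w1, w2)) => g2 w w1 w2
    | Sum.inr (Sum.inr (w1, w2)), Sum.inr (Sum.inl w) => star (g2 w w1 w2)
    | _, _ => 0

/-- Heisenberg evolution. -/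
noncomputable def heis {n : Type*} [Fintype n] [DecidableEq n]
    (H X : Matrix n n ℂ) (t : ℝ) : Matrix n n ℂ :=
  NormedSpace.exp ((Complex.I * t) • H) * X * NormedSpace.exp ((-(Complex.I * t)) • H)

lemma heis_diag {n : Type*} [Fintype n] [DecidableEq n] (d : n → ℂ) (X : Matrix n n ℂ)
    (t : ℝ) (i j : n) :
    heis (Matrix.diagonal d) X t i j
      = Complex.exp (Complex.I * t * d i) * X i j * Complex.exp (-(Complex.I * t) * d j) := by
  rw [heis, ← Matrix.diagonal_smul, ← Matrix.diagonal_smul, Matrix.exp_diagonal,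
    Matrix.exp_diagonal, Matrix.mul_diagonal, Matrix.diagonal_mul, Pi.exp_def,
    ← Complex.exp_eq_exp_ℂ]
  simp [← Complex.exp_eq_exp_ℂ]

lemma heis_B4 {F : Type*} [Fintype F] [DecidableEq F] (freq : F → ℝ)
    (g1 : F → ℂ) (g2 : F → F → F → ℂ) (t : ℝ) :
    heis (H4 freq) (B4 g1 g2) t
      = B4 (fun w => Complex.exp (-(Complex.I * t * freq w)) * g1 w)
          (fun w w1 w2 => Complex.exp (Complex.I * t * (freq w - freq w1 - freq w2))
            * g2 w w1 w2) := by
  ext i j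
  rcases i with i | i | ⟨i1, i2⟩ <;> rcases j with j | j | ⟨j1, j2⟩ <;>
    simp [H4, heis_diag, B4, ← Complex.exp_conj, ← Complex.exp_add, _root_.map_mul] <;>
    ring_nf <;>
    simp [mul_comm, mul_left_comm, mul_assoc, Complex.exp_add, sub_eq_add_neg, add_comm,
      add_left_comm, mul_add, Complex.exp_conj]

lemma B4_four {F : Type*} [Fintype F] [DecidableEq F]
    (A1 B1 C1 D1 : F → ℂ) (A2 B2 C2 D2 : F → F → F → ℂ) :
    (B4 A1 A2 * B4 B1 B2 * B4 C1 C2 * B4 D1 D2) (Sum.inl ()) (Sum.inl ())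
      = (∑ w, A1 w * star (B1 w)) * (∑ w, C1 w * star (D1 w))
        + ∑ w, ∑ w', ∑ w1, ∑ w2,
            A1 w' * B2 w' w1 w2 * star (C2 w w1 w2) * star (D1 w) := by
  simp only [Matrix.mul_apply, B4, Matrix.of_apply, Fintype.sum_sum_type, Fintype.sum_prod_type,
    Finset.univ_unique, Finset.sum_const, Finset.card_singleton, one_smul, Finset.sum_singleton]
  simp only [mul_zero, zero_mul, add_zero, zero_add, Finset.sum_const_zero, smul_zero,
    mul_zero, zero_mul, add_zero]
  simp [Finset.sum_mul, Finset.mul_sum, add_mul, mul_assoc, mul_comm, mul_left_comm]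
  simp only [mul_add, Finset.mul_sum, Finset.sum_add_distrib]
  congr 1
  · exact Finset.sum_congr rfl fun x _ => Finset.sum_congr rfl fun y _ => by ring
  · refine Finset.sum_congr rfl fun x _ => ?_
    have rot : ∀ (f : F → F → F → ℂ), ∑ b : F, ∑ c : F, ∑ a : F, f a b c
        = ∑ a : F, ∑ b : F, ∑ c : F, f a b c := fun f =>
      (Finset.sum_congr rfl fun b _ => Finset.sum_comm ..).trans (Finset.sum_comm ..)
    rw [rot fun a b c => (starRingEnd ℂ) (D1 x) * (A1 a * (B2 a b c * (starRingEnd ℂ) (C2 x b c)))]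
    exact Finset.sum_congr rfl fun x1 _ => Finset.sum_congr rfl fun x2 _ =>
      Finset.sum_congr rfl fun x3 _ => by ring

lemma star_cexp (z : ℂ) : star (Complex.exp z) = Complex.exp (star z) := by
  simp [RCLike.star_def, ← Complex.exp_conj]

lemma two_pt (t u w : ℝ) (x y : ℂ) :
    Complex.exp (-(Complex.I * t * w)) * x * star (Complex.exp (-(Complex.I * u * w)) * y)
      = Complex.exp (-(Complex.I * w * (t - u))) * (x * star y) := by
  rw [star_mul', star_cexp]
  have h1 : (star (-(Complex.I * (u:ℂ) * (w:ℂ))) : ℂ) = Complex.I * u * w := by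
    simp [Complex.conj_ofReal]
  rw [h1]
  rw [show Complex.exp (-(Complex.I * t * w)) * x *
      (Complex.exp (Complex.I * u * w) * star y)
    = Complex.exp (-(Complex.I * t * w)) * Complex.exp (Complex.I * u * w) * (x * star y)
    from by ring, ← Complex.exp_add]
  congr 2
  ring

lemma four_pt (s s1 s2 s3 w w' w1 w2 : ℝ) (a b c d : ℂ) :
    Complex.exp (-(Complex.I * s * w')) * a
      * (Complex.exp (Complex.I * s1 * (w' - w1 - w2)) * b)
      * star (Complex.exp (Complex.I * s2 * (w - w1 - w2)) * c)
      * star (Complex.exp (-(Complex.I * s3 * w)) * d)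
    = Complex.exp (-(Complex.I * w' * (s - s1)))
        * Complex.exp (-(Complex.I * (w1 + w2) * (s1 - s2)))
        * Complex.exp (-(Complex.I * w * (s2 - s3)))
        * a * b * star c * star d := by
  rw [star_mul', star_mul', star_cexp, star_cexp]
  have h1 : (star (Complex.I * (s2:ℂ) * ((w:ℂ) - w1 - w2)) : ℂ)
      = -(Complex.I * s2 * ((w:ℂ) - w1 - w2)) := by
    simp [Complex.conj_ofReal]
  have h2 : (star (-(Complex.I * (s3:ℂ) * (w:ℂ))) : ℂ) = Complex.I * s3 * w := by
    simp [Complex.conj_ofReal]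
  rw [h1, h2]
  rw [show Complex.exp (-(Complex.I * s * w')) * a
        * (Complex.exp (Complex.I * s1 * ((w':ℂ) - w1 - w2)) * b)
        * (Complex.exp (-(Complex.I * s2 * ((w:ℂ) - w1 - w2))) * star c)
        * (Complex.exp (Complex.I * s3 * w) * star d)
      = Complex.exp (-(Complex.I * s * w')) * Complex.exp (Complex.I * s1 * ((w':ℂ) - w1 - w2))
        * Complex.exp (-(Complex.I * s2 * ((w:ℂ) - w1 - w2)))
        * Complex.exp (Complex.I * s3 * w) * a * b * star c * star d from by ring,
    ← Complex.exp_add, ← Complex.exp_add, ← Complex.exp_add]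
  rw [show Complex.exp (-(Complex.I * (w':ℂ) * ((s:ℂ) - s1)))
        * Complex.exp (-(Complex.I * ((w1:ℂ) + w2) * ((s1:ℂ) - s2)))
        * Complex.exp (-(Complex.I * (w:ℂ) * ((s2:ℂ) - s3)))
      = Complex.exp (-(Complex.I * (w':ℂ) * ((s:ℂ) - s1))
          + -(Complex.I * ((w1:ℂ) + w2) * ((s1:ℂ) - s2))
          + -(Complex.I * (w:ℂ) * ((s2:ℂ) - s3))) from by
    rw [Complex.exp_add, Complex.exp_add]]
  congr 5
  ring

/-- In the fourth-order environment model, the four-point vacuum correlation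
function factorises into a product of two-point functions plus an explicit connected part. -/
theorem stmt16 {F : Type*} [Fintype F] [DecidableEq F] (freq : F → ℝ)
    (a1 b1 c1 d1 : F → ℂ) (a2 b2 c2 d2 : F → F → F → ℂ) (s s1 s2 s3 : ℝ) :
    (heis (H4 freq) (B4 a1 a2) s * heis (H4 freq) (B4 b1 b2) s1
        * heis (H4 freq) (B4 c1 c2) s2 * heis (H4 freq) (B4 d1 d2) s3)
        (Sum.inl ()) (Sum.inl ())
      = (∑ w : F, Complex.exp (-(Complex.I * (freq w) * (s - s1))) * (a1 w * star (b1 w)))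
          * (∑ w : F, Complex.exp (-(Complex.I * (freq w) * (s2 - s3))) * (c1 w * star (d1 w)))
        + ∑ w : F, ∑ w' : F, ∑ w1 : F, ∑ w2 : F,
            Complex.exp (-(Complex.I * (freq w') * (s - s1)))
              * Complex.exp (-(Complex.I * ((freq w1 : ℝ) + freq w2) * (s1 - s2)))
              * Complex.exp (-(Complex.I * (freq w) * (s2 - s3)))
              * a1 w' * b2 w' w1 w2 * star (c2 w w1 w2) * star (d1 w) := by
  rw [heis_B4, heis_B4, heis_B4, heis_B4, B4_four]
  congr 1
  · congr 1 <;> exact Finset.sum_congr rfl fun w _ => two_pt _ _ _ _ _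
  · refine Finset.sum_congr rfl fun w _ => Finset.sum_congr rfl fun w' _ =>
      Finset.sum_congr rfl fun w1 _ => Finset.sum_congr rfl fun w2 _ => ?_
    have := four_pt s s1 s2 s3 (freq w) (freq w') (freq w1) (freq w2)
      (a1 w') (b2 w' w1 w2) (c2 w w1 w2) (d1 w)
    rw [this]
end
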